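/- arXiv:2005.09462 — 2 statements merged into one kernel-verified Lean document; each statement's English description precedes it below -/
import Mathlib

section
/- Let g : ℕ → ℝ be nonnegative and nondecreasing, and let T be a tree that is not a caterpillar, with mate T' (with respect to a longest path P and a non-leaf off-path neighbour u). Then W(T'; g) ≤ W(T; g), where W(G;g) = Σ_{{a,b}} g(d(a,b)). If moreover g is strictly increasing, then W(T'; g) < W(T; g). -/
open SimpleGraph Finset

attribute [local instance] Classical.propDecidable

variable {V : Type*}

/-- The eccentricity of a vertex: the maximum distance to any other vertex. -/
noncomputable def ecc [Fintype V] (G : SimpleGraph V) (v : V) : ℕ :=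
  Finset.univ.sup fun u => G.dist v u

/-- The diameter: the maximum eccentricity. -/
noncomputable def graphDiam [Fintype V] (G : SimpleGraph V) : ℕ :=
  Finset.univ.sup fun v => ecc G v

/-- The radius: the minimum eccentricity. -/
noncomputable def graphRad [Fintype V] [Nonempty V] (G : SimpleGraph V) : ℕ :=
  Finset.univ.inf' Finset.univ_nonempty fun v => ecc G v

/-- The Wiener-type index `W(G;g)`: sum of `g (d(u,v))` over unordered pairs of
distinct vertices (here realised as half of the sum over ordered pairs). -/
noncomputable def wiener [Fintype V] (G : SimpleGraph V) (g : ℕ → ℝ) : ℝ :=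
  (∑ p ∈ Finset.univ.offDiag, g (G.dist p.1 p.2)) / 2

/-- Steiner distance of a set `A`: minimum number of edges of a subtree whose
vertex set contains `A` (in a tree, a connected subgraph on `m+1` vertices has `m` edges). -/
noncomputable def steinerDist [Fintype V] (G : SimpleGraph V) (A : Finset V) : ℕ :=
  sInf {m | ∃ S : Finset V, A ⊆ S ∧ (G.induce (S : Set V)).Connected ∧ S.card = m + 1}

/-- The `k`-Steiner Wiener index. -/
noncomputable def steinerWiener [Fintype V] (G : SimpleGraph V) (k : ℕ) : ℕ :=
  ∑ A ∈ Finset.univ.powersetCard k, steinerDist G A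

/-- A leaf (pendent vertex): a vertex of degree 1. -/
def IsLeaf (G : SimpleGraph V) (v : V) : Prop :=
  Nat.card {u : V // G.Adj v u} = 1

/-- A caterpillar: a tree in which deleting all leaves yields a path;
equivalently (for trees) every non-leaf vertex has at most two non-leaf neighbours. -/
def IsCaterpillar (G : SimpleGraph V) : Prop :=
  ∀ v : V, ¬ IsLeaf G v → Nat.card {u : V // G.Adj v u ∧ ¬ IsLeaf G u} ≤ 2

/-- Two graphs have the same eccentric sequence. -/
def sameEccSeq {W : Type*} [Fintype V] [Fintype W]
    (G : SimpleGraph V) (H : SimpleGraph W) : Prop :=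
  ∀ k : ℕ, Nat.card {v : V // ecc G v = k} = Nat.card {w : W // ecc H w = k}

/-- `mateU G u w`: the set of vertices lying in components of `G - u` not containing
the vertex `w` (a vertex of the longest path): those `x ≠ u` not reachable from `w`
once all edges at `u` are removed. -/
def mateU (G : SimpleGraph V) (u w : V) : Set V :=
  {x | x ≠ u ∧ ¬ (G.deleteEdges {e : Sym2 V | u ∈ e}).Reachable x w}

/-- The mate of `G` w.r.t. the path vertex `w = v_j`, its successor `w' = v_{j+1}` and
the off-path non-leaf neighbour `u`: each edge `uz` with `z ∈ U` is replaced by `w'z`. -/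
def mate (G : SimpleGraph V) (u w w' : V) : SimpleGraph V :=
  (G.deleteEdges {e | ∃ z ∈ mateU G u w, G.Adj u z ∧ e = s(u, z)}) ⊔
    SimpleGraph.fromEdgeSet {e | ∃ z ∈ mateU G u w, G.Adj u z ∧ e = s(w', z)}

/-- `R`: the vertices of `V - U` in the component of `G - v_j v_{j+1}` containing `v_{j+1}`. -/
def mateR (G : SimpleGraph V) (u vj vj1 : V) : Set V :=
  {x | x ∉ mateU G u vj ∧ (G.deleteEdges {s(vj, vj1)}).Reachable x vj1}

/-!
Let `U` be the set of vertices in the branches hanging off `u` away from `v_j`, and let `σ` act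
on ordered pairs by swapping `u` and `v_{j+1}` in the coordinate outside `U` whenever exactly one
coordinate lies in `U`. Since `u, v_{j+1} ∉ U`, `σ` is an involution of the off-diagonal pairs,
and the tree distances satisfy `d_{T'}(σ(a, b)) ≤ d_T(a, b)`: paths avoiding the moved edges
survive in `T'`, and a path leaving `U` through `u` in `T` leaves it through `v_{j+1}` in `T'`.
Reindexing the sum by `σ` gives the weak inequality. For strictness, a neighbour `x ∈ U` of `u`
and `v_{j+2}` (which exists because `P` is a longest path) are at distance `4` in `T` and `2`
in `T'`.
-/

open Function

section Wiener

theorem Finset.sum_offDiag_comp_of_involutive {α β : Type*} [Fintype α] [AddCommMonoid β]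
    {σ : α × α → α × α} (hσ : Involutive σ) (hσ_ne : ∀ q : α × α, q.1 ≠ q.2 → (σ q).1 ≠ (σ q).2)
    (f : α × α → β) : ∑ q ∈ univ.offDiag, f (σ q) = ∑ q ∈ univ.offDiag, f q := by
  refine Finset.sum_bijective σ hσ.bijective (fun q => ?_) (fun _ _ => rfl)
  simp only [mem_offDiag, mem_univ, true_and]
  exact ⟨hσ_ne q, fun h => hσ q ▸ hσ_ne (σ q) h⟩

variable [Fintype V] {G H : SimpleGraph V} {g : ℕ → ℝ} {σ : V × V → V × V}

theorem wiener_le_of_involutive (hg : Monotone g) (hσ : Involutive σ)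
    (hσ_ne : ∀ q : V × V, q.1 ≠ q.2 → (σ q).1 ≠ (σ q).2)
    (hdist : ∀ q : V × V, q.1 ≠ q.2 → H.dist (σ q).1 (σ q).2 ≤ G.dist q.1 q.2) :
    wiener H g ≤ wiener G g := by
  unfold wiener
  rw [← Finset.sum_offDiag_comp_of_involutive hσ hσ_ne]
  gcongr with q hq
  exact hg (hdist q (mem_offDiag.mp hq).2.2)

theorem wiener_lt_of_involutive (hg : StrictMono g) (hσ : Involutive σ)
    (hσ_ne : ∀ q : V × V, q.1 ≠ q.2 → (σ q).1 ≠ (σ q).2)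
    (hdist : ∀ q : V × V, q.1 ≠ q.2 → H.dist (σ q).1 (σ q).2 ≤ G.dist q.1 q.2)
    (q₀ : V × V) (hq₀ : q₀.1 ≠ q₀.2) (hlt : H.dist (σ q₀).1 (σ q₀).2 < G.dist q₀.1 q₀.2) :
    wiener H g < wiener G g := by
  unfold wiener
  rw [← Finset.sum_offDiag_comp_of_involutive hσ hσ_ne]
  gcongr ?_ / 2
  refine Finset.sum_lt_sum (fun q hq => hg.monotone (hdist q (mem_offDiag.mp hq).2.2))
    ⟨q₀, by simpa using hq₀, hg hlt⟩

end Wiener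

section CrossSwap

variable {U : Set V} {a b : V}

/-- When `a, b ∉ U`, this applies the transposition `(a b)` to the coordinate outside `U` of a
pair with exactly one coordinate in `U`, and fixes every other pair. -/
noncomputable def crossSwap (U : Set V) (a b : V) (q : V × V) : V × V :=
  (if q.2 ∈ U then Equiv.swap a b q.1 else q.1, if q.1 ∈ U then Equiv.swap a b q.2 else q.2)

theorem Equiv.swap_apply_mem_iff (ha : a ∉ U) (hb : b ∉ U) (x : V) :
    Equiv.swap a b x ∈ U ↔ x ∈ U := by
  rw [Equiv.swap_apply_def]
  split_ifs with h₁ h₂ <;> simp_all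

theorem Equiv.swap_apply_of_mem (ha : a ∉ U) (hb : b ∉ U) {x : V} (hx : x ∈ U) :
    Equiv.swap a b x = x :=
  Equiv.swap_apply_of_ne_of_ne (ne_of_mem_of_not_mem hx ha) (ne_of_mem_of_not_mem hx hb)

theorem crossSwap_involutive (ha : a ∉ U) (hb : b ∉ U) : Involutive (crossSwap U a b) := by
  rintro ⟨x, y⟩
  by_cases hx : x ∈ U <;> by_cases hy : y ∈ U <;>
    simp [crossSwap, hx, hy, Equiv.swap_apply_mem_iff ha hb, Equiv.swap_apply_of_mem ha hb]

theorem crossSwap_fst_ne_snd (ha : a ∉ U) (hb : b ∉ U) {q : V × V} (hq : q.1 ≠ q.2) :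
    (crossSwap U a b q).1 ≠ (crossSwap U a b q).2 := by
  obtain ⟨x, y⟩ := q
  by_cases hx : x ∈ U <;> by_cases hy : y ∈ U <;>
    simp only [crossSwap, hx, hy, if_true, if_false, Equiv.swap_apply_of_mem ha hb, ne_eq] <;>
    grind [Equiv.swap_apply_mem_iff]

theorem crossSwap_mk_of_mem_of_notMem {x y : V} (hx : x ∈ U) (hy : y ∉ U) :
    crossSwap U a b (x, y) = (x, Equiv.swap a b y) := by
  simp [crossSwap, hx, hy]

end CrossSwap

namespace SimpleGraph

theorem Walk.dist_add_dist_le_length {G : SimpleGraph V} {x y u : V} (q : G.Walk x y)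
    (hu : u ∈ q.support) : G.dist x u + G.dist u y ≤ q.length := by
  calc G.dist x u + G.dist u y ≤ (q.takeUntil u hu).length + (q.dropUntil u hu).length :=
        add_le_add (dist_le _) (dist_le _)
    _ = q.length := by rw [← Walk.length_append, Walk.take_spec]

theorem IsTree.length_eq_dist {G : SimpleGraph V} (hG : G.IsTree) {x y : V} {q : G.Walk x y}
    (hq : q.IsPath) : q.length = G.dist x y := by
  obtain ⟨r, hr, hrl⟩ := hG.connected.exists_path_of_dist x y
  rw [(hG.existsUnique_path x y).unique hq hr, hrl]

theorem dist_le_graphDiam [Fintype V] (G : SimpleGraph V) (x y : V) :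
    G.dist x y ≤ graphDiam G :=
  (le_sup (f := G.dist x) (mem_univ y)).trans (le_sup (f := ecc G) (mem_univ x))

theorem exists_adj_ne_of_not_isLeaf {G : SimpleGraph V} {u w : V} (hu : ¬ IsLeaf G u)
    (huw : G.Adj u w) : ∃ z, G.Adj u z ∧ z ≠ w := by
  by_contra! h
  exact hu (Nat.card_eq_one_iff_exists.mpr ⟨⟨w, huw⟩, fun z => Subtype.ext (h z z.2)⟩)

theorem dist_le_of_edist_le {G : SimpleGraph V} {x y : V} {n : ℕ} (h : G.edist x y ≤ n) :
    G.dist x y ≤ n :=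
  ENat.toNat_le_of_le_natCast h

section MateU

variable {G : SimpleGraph V} {u w x y : V}

theorem left_notMem_mateU : u ∉ mateU G u w := fun h => h.1 rfl

theorem right_notMem_mateU : w ∉ mateU G u w := fun h => h.2 .rfl

theorem mem_mateU_of_adj (hx : x ∈ mateU G u w) (hy : y ≠ u) (hxy : G.Adj x y) :
    y ∈ mateU G u w := by
  refine ⟨hy, fun hr => hx.2 (Reachable.trans (Adj.reachable ?_) hr)⟩
  rw [deleteEdges_adj]
  exact ⟨hxy, by simp [hx.1.symm, hy.symm]⟩

theorem notMem_mateU_of_adj (hx : x ∉ mateU G u w) (hxu : x ≠ u) (hxy : G.Adj x y) :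
    y ∉ mateU G u w :=
  fun hy => hx (mem_mateU_of_adj hy hxu hxy.symm)

theorem Walk.mem_support_of_mem_mateU (q : G.Walk x y) (hx : x ∈ mateU G u w)
    (hy : y ∉ mateU G u w) : u ∈ q.support := by
  induction q with
  | nil => exact absurd hx hy
  | @cons _ c _ h r ih =>
    by_cases hc : c = u
    · exact List.mem_cons_of_mem _ (hc ▸ r.start_mem_support)
    · exact List.mem_cons_of_mem _ (ih (mem_mateU_of_adj hx hc h) hy)

theorem Walk.mem_support_of_notMem_mateU (q : G.Walk x y) (hx : x ∉ mateU G u w)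
    (hy : y ∈ mateU G u w) : u ∈ q.support := by
  simpa using q.reverse.mem_support_of_mem_mateU hy hx

theorem IsTree.mem_mateU_of_adj_of_ne (hG : G.IsTree) (huw : G.Adj u w) (hux : G.Adj u x)
    (hxw : x ≠ w) : x ∈ mateU G u w := by
  refine ⟨hux.ne', fun hr =>
    isBridge_iff.mp (isAcyclic_iff_forall_adj_isBridge.mp hG.isAcyclic hux) ?_⟩
  have hsub : G.deleteEdges {e | u ∈ e} ≤ G.deleteEdges {s(u, x)} := deleteEdges_anti (by simp)
  have huw' : (G.deleteEdges {s(u, x)}).Adj u w := by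
    rw [deleteEdges_adj]
    simp [huw, hxw.symm, huw.ne']
  exact huw'.reachable.trans (hr.mono hsub).symm

theorem IsTree.dist_eq_dist_add_dist_of_mem_mateU (hG : G.IsTree) (hx : x ∈ mateU G u w)
    (hy : y ∉ mateU G u w) : G.dist x y = G.dist x u + G.dist u y := by
  obtain ⟨q, hql⟩ := hG.connected.exists_walk_length_eq_dist x y
  exact le_antisymm hG.connected.dist_triangle
    (hql ▸ q.dist_add_dist_le_length (q.mem_support_of_mem_mateU hx hy))

theorem IsTree.dist_eq_dist_add_one_of_notMem_mateU (hG : G.IsTree) (huw : G.Adj u w)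
    (hy : y ∉ mateU G u w) (hyu : y ≠ u) : G.dist u y = G.dist w y + 1 := by
  refine le_antisymm ?_ ?_
  · calc G.dist u y ≤ G.dist u w + G.dist w y := hG.connected.dist_triangle
      _ = G.dist w y + 1 := by rw [dist_eq_one_iff_adj.mpr huw, add_comm]
  · obtain ⟨q, hq, hql⟩ := hG.connected.exists_path_of_dist u y
    cases q with
    | nil => exact absurd rfl hyu
    | @cons _ c _ huc r =>
      have hur : u ∉ r.support := ((Walk.cons_isPath_iff _ _).mp hq).2
      obtain rfl : c = w := by
        by_contra hcw
        exact hur (r.mem_support_of_mem_mateU (hG.mem_mateU_of_adj_of_ne huw huc hcw) hy)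
      rw [← hql, Walk.length_cons]
      exact Nat.add_le_add_right (dist_le r) 1

end MateU

section Mate

variable {G : SimpleGraph V} {u w w' x y a b : V}

theorem mate_adj_of_adj (hab : G.Adj a b) (ha : a = u → b ∉ mateU G u w)
    (hb : b = u → a ∉ mateU G u w) : (mate G u w w').Adj a b := by
  left
  rw [deleteEdges_adj]
  refine ⟨hab, ?_⟩
  rintro ⟨z, hz, -, he⟩
  rcases Sym2.eq_iff.mp he with ⟨rfl, rfl⟩ | ⟨rfl, rfl⟩
  · exact ha rfl hz
  · exact hb rfl hz

theorem mate_adj_of_mem_mateU (hx : x ∈ mateU G u w) (hux : G.Adj u x)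
    (hw' : w' ∉ mateU G u w) : (mate G u w w').Adj w' x := by
  right
  rw [fromEdgeSet_adj]
  exact ⟨⟨x, hx, hux, rfl⟩, fun h => hw' (h ▸ hx)⟩

theorem mate_edist_le_length (q : G.Walk a b)
    (hq : u ∈ q.support → ∀ x ∈ q.support, x ∉ mateU G u w) :
    (mate G u w w').edist a b ≤ q.length := by
  have hsub : ∀ e ∈ q.edges, e ∈ (mate G u w w').edgeSet := by
    intro e he
    induction e with
    | h x y =>
      have hx := q.fst_mem_support_of_mem_edges he
      have hy := q.snd_mem_support_of_mem_edges he
      exact mate_adj_of_adj (q.edges_subset_edgeSet he) (fun h => hq (h ▸ hx) y hy)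
        (fun h => hq (h ▸ hy) x hx)
  simpa using edist_le (q.transfer _ hsub)

variable (hG : G.IsTree)
include hG

theorem IsTree.mate_edist_le_of_notMem (ha : a ∉ mateU G u w) (hb : b ∉ mateU G u w) :
    (mate G u w w').edist a b ≤ G.dist a b := by
  obtain ⟨q, hql⟩ := hG.connected.exists_walk_length_eq_dist a b
  rw [← hql]
  refine mate_edist_le_length q fun _ c hc hcU => ?_
  -- a geodesic from `a` to `b` through `c ∈ U` would pass through `u` twice
  have hac := hG.dist_eq_dist_add_dist_of_mem_mateU hcU ha
  have hcb := hG.dist_eq_dist_add_dist_of_mem_mateU hcU hb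
  have hq := q.dist_add_dist_le_length hc
  have huc : 0 < G.dist u c := hG.connected.pos_dist_of_ne hcU.1.symm
  have hab : G.dist a b ≤ G.dist a u + G.dist u b := hG.connected.dist_triangle
  have hca : G.dist a c = G.dist c a := dist_comm
  have hua : G.dist u a = G.dist a u := dist_comm
  have hcu : G.dist u c = G.dist c u := dist_comm
  omega

theorem IsTree.mate_edist_le_of_mem (hx : x ∈ mateU G u w) (hw' : w' ∉ mateU G u w) :
    (mate G u w w').edist w' x ≤ G.dist u x := by
  obtain ⟨q, hq, hql⟩ := hG.connected.exists_path_of_dist u x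
  cases q with
  | nil => exact absurd hx left_notMem_mateU
  | @cons _ c _ huc r =>
    have hur : u ∉ r.support := ((Walk.cons_isPath_iff _ _).mp hq).2
    have hc : c ∈ mateU G u w := by
      by_contra hc
      exact hur (r.mem_support_of_notMem_mateU hc hx)
    calc (mate G u w w').edist w' x
        ≤ (mate G u w w').edist w' c + (mate G u w w').edist c x := SimpleGraph.edist_triangle
      _ ≤ 1 + r.length := add_le_add (edist_eq_one_iff_adj.mpr
          (mate_adj_of_mem_mateU hc huc hw')).le (mate_edist_le_length r fun h => absurd h hur)
      _ = G.dist u x := by rw [← hql, Walk.length_cons]; push_cast; ring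

theorem IsTree.mate_edist_le_of_mem_of_mem (ha : a ∈ mateU G u w) (hb : b ∈ mateU G u w)
    (hw' : w' ∉ mateU G u w) : (mate G u w w').edist a b ≤ G.dist a b := by
  obtain ⟨q, hql⟩ := hG.connected.exists_walk_length_eq_dist a b
  rw [← hql]
  by_cases hu : u ∈ q.support
  · calc (mate G u w w').edist a b
        ≤ (mate G u w w').edist a w' + (mate G u w w').edist w' b := SimpleGraph.edist_triangle
      _ ≤ G.dist u a + G.dist u b := add_le_add
          (edist_comm.trans_le (hG.mate_edist_le_of_mem ha hw')) (hG.mate_edist_le_of_mem hb hw')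
      _ ≤ q.length := by
          rw [dist_comm]
          exact_mod_cast q.dist_add_dist_le_length hu
  · exact mate_edist_le_length q fun h => absurd h hu

theorem IsTree.mate_edist_swap_le (huw : G.Adj u w) (hww' : G.Adj w w') (hw'u : w' ≠ u)
    (hx : x ∈ mateU G u w) (hy : y ∉ mateU G u w) :
    (mate G u w w').edist x (Equiv.swap u w' y) ≤ G.dist x y := by
  have hw' : w' ∉ mateU G u w := notMem_mateU_of_adj right_notMem_mateU huw.ne' hww'
  have hxw' : (mate G u w w').edist x w' ≤ G.dist x u :=
    edist_comm.trans_le (dist_comm (G := G) ▸ hG.mate_edist_le_of_mem hx hw')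
  rw [hG.dist_eq_dist_add_dist_of_mem_mateU hx hy]
  rcases eq_or_ne y u with rfl | hyu
  · simpa using hxw'
  by_cases hyw' : y = w'
  · have huw' : G.dist u w' = 2 := by
      rw [hG.dist_eq_dist_add_one_of_notMem_mateU huw hw' hw'u, dist_eq_one_iff_adj.mpr hww']
    rw [hyw', Equiv.swap_apply_right, huw']
    calc (mate G u w w').edist x u
        ≤ (mate G u w w').edist x w' + (mate G u w w').edist w' u := SimpleGraph.edist_triangle
      _ ≤ G.dist x u + G.dist w' u := add_le_add hxw'
          (hG.mate_edist_le_of_notMem hw' left_notMem_mateU)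
      _ = G.dist x u + 2 := by rw [dist_comm (u := w'), huw']; rfl
  · have hw'y : G.dist w' y ≤ G.dist u y := by
      rw [hG.dist_eq_dist_add_one_of_notMem_mateU huw hy hyu]
      calc G.dist w' y ≤ G.dist w' w + G.dist w y := hG.connected.dist_triangle
        _ = G.dist w y + 1 := by rw [dist_eq_one_iff_adj.mpr hww'.symm, add_comm]
    calc (mate G u w w').edist x (Equiv.swap u w' y) = (mate G u w w').edist x y := by
          rw [Equiv.swap_apply_of_ne_of_ne hyu hyw']
      _ ≤ (mate G u w w').edist x w' + (mate G u w w').edist w' y := SimpleGraph.edist_triangle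
      _ ≤ G.dist x u + G.dist w' y := add_le_add hxw' (hG.mate_edist_le_of_notMem hw' hy)
      _ ≤ G.dist x u + G.dist u y := by exact_mod_cast Nat.add_le_add_left hw'y _

theorem IsTree.mate_dist_crossSwap_le (huw : G.Adj u w) (hww' : G.Adj w w') (hw'u : w' ≠ u)
    (q : V × V) :
    (mate G u w w').dist (crossSwap (mateU G u w) u w' q).1 (crossSwap (mateU G u w) u w' q).2
      ≤ G.dist q.1 q.2 := by
  have hw' : w' ∉ mateU G u w := notMem_mateU_of_adj right_notMem_mateU huw.ne' hww'
  obtain ⟨x, y⟩ := q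
  refine dist_le_of_edist_le ?_
  by_cases hx : x ∈ mateU G u w <;> by_cases hy : y ∈ mateU G u w
  · simpa [crossSwap, hx, hy, Equiv.swap_apply_of_mem left_notMem_mateU hw'] using
      hG.mate_edist_le_of_mem_of_mem hx hy hw'
  · rw [crossSwap_mk_of_mem_of_notMem hx hy]
    exact hG.mate_edist_swap_le huw hww' hw'u hx hy
  · simp only [crossSwap, hx, hy, if_true, if_false]
    rw [edist_comm, dist_comm]
    exact hG.mate_edist_swap_le huw hww' hw'u hy hx
  · simpa [crossSwap, hx, hy] using hG.mate_edist_le_of_notMem hx hy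

theorem IsTree.mate_dist_lt_dist (hux : G.Adj u x) (hx : x ∈ mateU G u w) (hw'y : G.Adj w' y)
    (hw' : w' ∉ mateU G u w) (hy : y ∉ mateU G u w) (huw : G.Adj u w) (hw'u : w' ≠ u)
    (hyu : y ≠ u) (hwy : w ≠ y) : (mate G u w w').dist x y < G.dist x y := by
  have hmate : (mate G u w w').edist x y ≤ 2 :=
    calc (mate G u w w').edist x y
        ≤ (mate G u w w').edist x w' + (mate G u w w').edist w' y := SimpleGraph.edist_triangle
      _ ≤ 1 + 1 := add_le_add
          (edist_comm.trans_le (edist_eq_one_iff_adj.mpr (mate_adj_of_mem_mateU hx hux hw')).le)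
          (edist_eq_one_iff_adj.mpr (mate_adj_of_adj hw'y (absurd · hw'u) (absurd · hyu))).le
  have hxy : G.dist x y = 1 + (G.dist w y + 1) := by
    rw [hG.dist_eq_dist_add_dist_of_mem_mateU hx hy, dist_eq_one_iff_adj.mpr hux.symm,
      hG.dist_eq_dist_add_one_of_notMem_mateU huw hy hyu]
  have hwy : 0 < G.dist w y := hG.connected.pos_dist_of_ne hwy
  have := dist_le_of_edist_le (n := 2) hmate
  omega

theorem IsTree.add_two_le_length_of_adj_of_notMem_support [Fintype V] {v₀ v₁ : V}
    {p : G.Walk v₀ v₁} (hp : p.IsPath) (hlen : p.length = graphDiam G) {j : ℕ}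
    (hwu : G.Adj (p.getVert j) u) (huP : u ∉ p.support) (hux : G.Adj u x)
    (hxw : x ≠ p.getVert j) : j + 2 ≤ p.length := by
  set w := p.getVert j
  have hw : w ∈ p.support := p.getVert_mem_support j
  have hx : x ∈ mateU G u w := hG.mem_mateU_of_adj_of_ne hwu.symm hux hxw
  have hv₀ : v₀ ∉ mateU G u w := fun h => huP <| p.support_takeUntil_subset_support hw
    ((p.takeUntil w hw).mem_support_of_mem_mateU h right_notMem_mateU)
  have hv₀u : v₀ ≠ u := fun h => huP (h ▸ p.start_mem_support)
  have hxv₀ := hG.dist_eq_dist_add_dist_of_mem_mateU hx hv₀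
  have huv₀ := hG.dist_eq_dist_add_one_of_notMem_mateU hwu.symm hv₀ hv₀u
  have hxu : G.dist x u = 1 := dist_eq_one_iff_adj.mpr hux.symm
  have hpw : p.length ≤ G.dist v₀ w + (p.length - j) :=
    calc p.length = G.dist v₀ v₁ := hG.length_eq_dist hp
      _ ≤ G.dist v₀ w + G.dist w v₁ := hG.connected.dist_triangle
      _ ≤ G.dist v₀ w + (p.length - j) :=
          Nat.add_le_add_left ((dist_le (p.drop j)).trans (p.drop_length j).le) _
  have hdiam := dist_le_graphDiam G x v₀
  have : G.dist v₀ w = G.dist w v₀ := dist_comm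
  omega

end Mate

end SimpleGraph

theorem stmt12_general [Fintype V] (g : ℕ → ℝ) (hgmono : Monotone g)
    (G : SimpleGraph V) (hG : G.IsTree)
    (v0 vd : V) (p : G.Walk v0 vd) (hp : p.IsPath)
    (hlen : p.length = graphDiam G) (j : ℕ)
    (hjlt : j < graphDiam G) (u : V) (hadj : G.Adj (p.getVert j) u)
    (huP : u ∉ p.support) (huNL : ¬ IsLeaf G u) :
    wiener (mate G u (p.getVert j) (p.getVert (j + 1))) g ≤ wiener G g ∧
      (StrictMono g →
        wiener (mate G u (p.getVert j) (p.getVert (j + 1))) g < wiener G g) := by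
  set w := p.getVert j
  set w' := p.getVert (j + 1)
  set y := p.getVert (j + 2)
  have huw : G.Adj u w := hadj.symm
  have hww' : G.Adj w w' := p.adj_getVert_succ (hlen ▸ hjlt)
  have hw'u : w' ≠ u := fun h => huP (h ▸ p.getVert_mem_support _)
  have hw' : w' ∉ mateU G u w := notMem_mateU_of_adj right_notMem_mateU huw.ne' hww'
  obtain ⟨x, hux, hxw⟩ := exists_adj_ne_of_not_isLeaf huNL huw
  have hx : x ∈ mateU G u w := hG.mem_mateU_of_adj_of_ne huw hux hxw
  have hj : j + 2 ≤ p.length :=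
    hG.add_two_le_length_of_adj_of_notMem_support hp hlen hadj huP hux hxw
  have hw'y : G.Adj w' y := p.adj_getVert_succ (by omega)
  have hyu : y ≠ u := fun h => huP (h ▸ p.getVert_mem_support _)
  have hwy : w ≠ y := fun h => by
    have := hp.getVert_injOn (by simp; omega) (by simp; omega) h
    omega
  have hy : y ∉ mateU G u w := notMem_mateU_of_adj hw' hw'u hw'y
  have hσ := crossSwap_involutive left_notMem_mateU hw'
  have hσ_ne := fun q => crossSwap_fst_ne_snd (q := q) left_notMem_mateU hw'
  have hdist := fun q (_ : q.1 ≠ q.2) => hG.mate_dist_crossSwap_le huw hww' hw'u q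
  refine ⟨wiener_le_of_involutive hgmono hσ hσ_ne hdist, fun hg =>
    wiener_lt_of_involutive hg hσ hσ_ne hdist (x, y) (ne_of_mem_of_not_mem hx hy) ?_⟩
  rw [crossSwap_mk_of_mem_of_notMem hx hy, Equiv.swap_apply_of_ne_of_ne hyu hw'y.ne']
  exact hG.mate_dist_lt_dist hux hx hw'y hw' hy huw hw'u hyu hwy

/-- If `g : ℕ → ℝ` is nonnegative and nondecreasing, then the mate `T'` of a
non-caterpillar tree `T` satisfies `W(T';g) ≤ W(T;g)`; if `g` is strictly
increasing, the inequality is strict. -/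
theorem stmt12 [Fintype V] (g : ℕ → ℝ) (hg0 : ∀ n : ℕ, 0 ≤ g n) (hgmono : Monotone g)
    (G : SimpleGraph V) (hG : G.IsTree)
    (hNC : ¬ IsCaterpillar G) (v0 vd : V) (p : G.Walk v0 vd) (hp : p.IsPath)
    (hlen : p.length = graphDiam G) (j : ℕ) (hj : graphDiam G ≤ 2 * j)
    (hjlt : j < graphDiam G) (u : V) (hadj : G.Adj (p.getVert j) u)
    (huP : u ∉ p.support) (huNL : ¬ IsLeaf G u) :
    wiener (mate G u (p.getVert j) (p.getVert (j + 1))) g ≤ wiener G g ∧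
      (StrictMono g →
        wiener (mate G u (p.getVert j) (p.getVert (j + 1))) g < wiener G g) :=
  stmt12_general g hgmono G hG v0 vd p hp hlen j hjlt u hadj huP huNL
end

section
/- Let g : ℕ → ℝ be nonnegative and nondecreasing, and let S be a tree eccentric sequence. Then among all trees with eccentric sequence S that minimise W(·; g), at least one is a caterpillar. If g is strictly increasing, then every tree with eccentric sequence S minimising W(·; g) is a caterpillar. -/
open SimpleGraph Finset

attribute [local instance] Classical.propDecidable

variable {V : Type*}

/-!
Let `T` be a tree that is not a caterpillar, so some vertex `v` has three neighbours that are
not leaves. A vertex `x₀` farthest from `v` lies in the branch at `v` of at most one of them;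
call two others `a` and `b`. Re-attach the subtrees hanging from `b` away from `v` to `a`.
Distances from vertices outside the branches of `a` and `b` do not change, and a vertex `x` in
those branches keeps eccentricity `d(x, v) + d(v, x₀)`, so all eccentricities are preserved.
Swapping `a` and `b` in the pairs with exactly one vertex in the moved subtree is a bijection
of pairs that does not increase any distance and takes a child of `b` and a child of `a` from
distance 4 to distance 2. Hence `W(·; g)` does not increase for monotone `g` and strictly
decreases for strictly monotone `g`. A minimiser of `W(·; g)` can then be replaced by one
that also minimises the Wiener index among such trees, which must be a caterpillar.
-/

section Eccentricity

variable [Fintype V]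

lemma dist_le_ecc (G : SimpleGraph V) (x y : V) : G.dist x y ≤ ecc G x :=
  Finset.le_sup (f := G.dist x) (Finset.mem_univ y)

lemma ecc_le_iff {G : SimpleGraph V} {x : V} {n : ℕ} :
    ecc G x ≤ n ↔ ∀ y, G.dist x y ≤ n := by
  simp [ecc]

lemma exists_dist_eq_ecc [Nonempty V] (G : SimpleGraph V) (x : V) :
    ∃ y, G.dist x y = ecc G x := by
  obtain ⟨y, -, hy⟩ := Finset.exists_mem_eq_sup Finset.univ Finset.univ_nonempty (G.dist x)
  exact ⟨y, hy.symm⟩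

end Eccentricity

section Wiener

variable [Fintype V] {G H : SimpleGraph V} {g : ℕ → ℝ}

lemma wiener_eq_of_perm (e : Equiv.Perm (V × V)) (he : ∀ p, (e p).1 = (e p).2 ↔ p.1 = p.2) :
    wiener H g = (∑ p ∈ univ.offDiag, g (H.dist (e p).1 (e p).2)) / 2 := by
  rw [wiener]
  congr 1
  exact (Finset.sum_equiv e (by simp [he]) fun _ _ ↦ rfl).symm

lemma wiener_le_wiener_of_perm (hg : Monotone g) (e : Equiv.Perm (V × V))
    (he : ∀ p, (e p).1 = (e p).2 ↔ p.1 = p.2)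
    (hd : ∀ p, H.dist (e p).1 (e p).2 ≤ G.dist p.1 p.2) :
    wiener H g ≤ wiener G g := by
  rw [wiener_eq_of_perm e he, wiener]
  gcongr with p
  exact hg (hd p)

lemma wiener_lt_wiener_of_perm (hg : StrictMono g) (e : Equiv.Perm (V × V))
    (he : ∀ p, (e p).1 = (e p).2 ↔ p.1 = p.2)
    (hd : ∀ p, H.dist (e p).1 (e p).2 ≤ G.dist p.1 p.2)
    (hlt : ∃ p : V × V, p.1 ≠ p.2 ∧ H.dist (e p).1 (e p).2 < G.dist p.1 p.2) :
    wiener H g < wiener G g := by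
  rw [wiener_eq_of_perm e he, wiener]
  obtain ⟨p, hp, hlt⟩ := hlt
  gcongr ?_ / _
  exact Finset.sum_lt_sum (fun p _ ↦ hg.monotone (hd p)) ⟨p, by simpa using hp, hg hlt⟩

end Wiener

lemma sameEccSeq.of_ecc_eq [Fintype V] {G H H' : SimpleGraph V} (h : sameEccSeq G H)
    (he : ∀ x, ecc H' x = ecc H x) : sameEccSeq G H' :=
  fun k ↦ (h k).trans (by simp only [he])

namespace SimpleGraph

section

variable {G : SimpleGraph V} {p q x y : V}

lemma Hom.dist_le {W : Type*} {G' : SimpleGraph W} (f : G →g G') (h : G.Reachable x y) :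
    G'.dist (f x) (f y) ≤ G.dist x y := by
  obtain ⟨w, hw⟩ := h.exists_walk_length_eq_dist
  calc G'.dist (f x) (f y) ≤ (w.map f).length := SimpleGraph.dist_le _
    _ = G.dist x y := by rw [Walk.length_map, hw]

lemma Walk.le_add_length_of_forall_adj {φ : V → ℕ}
    (hφ : ∀ ⦃x y⦄, G.Adj x y → φ x ≤ φ y + 1) :
    ∀ {x y : V} (w : G.Walk x y), φ x ≤ φ y + w.length
  | _, _, .nil => by simp
  | _, _, .cons h w => by
    have := hφ h
    have := le_add_length_of_forall_adj hφ w
    rw [length_cons]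
    omega

lemma Reachable.le_add_dist_of_forall_adj {φ : V → ℕ}
    (hφ : ∀ ⦃x y⦄, G.Adj x y → φ x ≤ φ y + 1) (h : G.Reachable x y) :
    φ x ≤ φ y + G.dist x y := by
  obtain ⟨w, hw⟩ := h.exists_walk_length_eq_dist
  exact hw ▸ w.le_add_length_of_forall_adj hφ

def edgeSide (G : SimpleGraph V) (p q : V) : Set V :=
  {x | (G.deleteEdges {s(p, q)}).Reachable p x}

lemma mem_edgeSide_self : p ∈ G.edgeSide p q := Reachable.refl _

lemma mem_edgeSide_of_adj (hx : x ∈ G.edgeSide p q) (hxy : G.Adj x y)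
    (hne : s(x, y) ≠ s(p, q)) :
    y ∈ G.edgeSide p q :=
  Reachable.trans hx (deleteEdges_adj.mpr ⟨hxy, hne⟩).reachable

lemma mem_edgeSide_of_adj_of_ne (hpx : G.Adj p x) (hxq : x ≠ q) : x ∈ G.edgeSide p q :=
  mem_edgeSide_of_adj mem_edgeSide_self hpx (hxq ∘ Sym2.congr_right.mp)

lemma Connected.mem_edgeSide_or_mem_edgeSide (hG : G.Connected) (p q x : V) :
    x ∈ G.edgeSide p q ∨ x ∈ G.edgeSide q p := by
  suffices ∀ {x y : V} (w : G.Walk x y), y ∈ G.edgeSide p q ∨ y ∈ G.edgeSide q p →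
      x ∈ G.edgeSide p q ∨ x ∈ G.edgeSide q p from this (hG x p).some (.inl mem_edgeSide_self)
  intro x y w hy
  induction w with
  | nil => exact hy
  | @cons x z _ h w ih =>
    by_cases he : s(z, x) = s(p, q)
    · rcases Sym2.eq_iff.mp he with ⟨-, rfl⟩ | ⟨-, rfl⟩
      · exact .inr mem_edgeSide_self
      · exact .inl mem_edgeSide_self
    · refine (ih hy).imp (mem_edgeSide_of_adj · h.symm he) (mem_edgeSide_of_adj · h.symm ?_)
      rwa [Sym2.eq_swap (a := q)]

lemma IsAcyclic.notMem_edgeSide (hG : G.IsAcyclic) (hpq : G.Adj p q) (hx : x ∈ G.edgeSide p q) :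
    x ∉ G.edgeSide q p := fun hx' ↦ by
  refine isBridge_iff.mp (isAcyclic_iff_forall_adj_isBridge.mp hG hpq) (hx.trans ?_)
  rw [edgeSide, Set.mem_ofPred_eq, Sym2.eq_swap] at hx'
  exact hx'.symm

namespace IsTree

variable (hG : G.IsTree)
include hG

lemma add_dist_le_length (hpq : G.Adj p q) {x y : V} (w : G.Walk x y)
    (hx : x ∈ G.edgeSide p q) (hy : y ∈ G.edgeSide q p) :
    G.dist x p + 1 + G.dist q y ≤ w.length := by
  induction w with
  | nil => exact absurd hy (hG.isAcyclic.notMem_edgeSide hpq hx)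
  | @cons x z y h w ih =>
    rw [Walk.length_cons]
    by_cases hz : z ∈ G.edgeSide p q
    · have := hG.connected.dist_triangle (u := x) (v := z) (w := p)
      rw [dist_eq_one_iff_adj.mpr h] at this
      have := ih hz hy
      omega
    · have he : s(x, z) = s(p, q) := by_contra fun he ↦ hz (mem_edgeSide_of_adj hx h he)
      rcases Sym2.eq_iff.mp he with ⟨rfl, rfl⟩ | ⟨rfl, -⟩
      · have := dist_le w
        simp only [dist_self]
        omega
      · exact absurd mem_edgeSide_self (hG.isAcyclic.notMem_edgeSide hpq hx)

lemma dist_eq_of_mem_edgeSide (hpq : G.Adj p q) (hx : x ∈ G.edgeSide p q)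
    (hy : y ∈ G.edgeSide q p) : G.dist x y = G.dist x p + 1 + G.dist q y := by
  obtain ⟨w, hw⟩ := hG.connected.exists_walk_length_eq_dist x y
  have := hG.add_dist_le_length hpq w hx hy
  have := hG.connected.dist_triangle (u := x) (v := p) (w := y)
  have := hG.connected.dist_triangle (u := p) (v := q) (w := y)
  rw [dist_eq_one_iff_adj.mpr hpq] at this
  omega

lemma dist_eq_add_one_of_mem_edgeSide (hpq : G.Adj p q) (hx : x ∈ G.edgeSide p q) :
    G.dist x q = G.dist x p + 1 := by
  simpa using hG.dist_eq_of_mem_edgeSide hpq hx mem_edgeSide_self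

lemma dist_eq_add_one_of_notMem_edgeSide (hpq : G.Adj p q) (hx : x ∉ G.edgeSide p q) :
    G.dist x p = G.dist x q + 1 :=
  hG.dist_eq_add_one_of_mem_edgeSide hpq.symm
    ((hG.connected.mem_edgeSide_or_mem_edgeSide p q x).resolve_left hx)

lemma dist_eq_add_of_mem_edgeSide (hpq : G.Adj p q) (hx : x ∈ G.edgeSide p q)
    (hy : y ∉ G.edgeSide p q) : G.dist x y = G.dist x q + G.dist q y := by
  have hy := (hG.connected.mem_edgeSide_or_mem_edgeSide p q y).resolve_left hy
  rw [hG.dist_eq_of_mem_edgeSide hpq hx hy, hG.dist_eq_add_one_of_mem_edgeSide hpq hx]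

lemma notMem_edgeSide_of_mem_edgeSide {v : V} (hp : G.Adj p v) (hq : G.Adj q v) (hpq : p ≠ q)
    (hx : x ∈ G.edgeSide p v) : x ∉ G.edgeSide q v := fun hx' ↦ by
  have side {p q : V} (hp : G.Adj p v) (hq : G.Adj q v) (hpq : p ≠ q)
      (hx : x ∈ G.edgeSide p v) :
      G.dist x q = G.dist x p + 2 := by
    have hq' := hG.isAcyclic.notMem_edgeSide hp.symm (mem_edgeSide_of_adj_of_ne hq.symm hpq.symm)
    rw [hG.dist_eq_add_of_mem_edgeSide hp hx hq', hG.dist_eq_add_one_of_mem_edgeSide hp hx,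
      dist_eq_one_iff_adj.mpr hq.symm]
  have := side hp hq hpq hx
  have := side hq hp hpq.symm hx'
  omega

end IsTree

end

section Eccentricity

variable [Fintype V] {T : SimpleGraph V} {v p x x₀ : V}

lemma IsTree.ecc_eq_dist_of_mem_edgeSide (hT : T.IsTree) (hp : T.Adj p v)
    (hx : x ∈ T.edgeSide p v) (hx₀ : x₀ ∉ T.edgeSide p v)
    (hmax : ∀ y, T.dist v y ≤ T.dist v x₀) :
    ecc T x = T.dist x x₀ := by
  refine (ecc_le_iff.mpr fun y ↦ ?_).antisymm (dist_le_ecc T x x₀)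
  have := hT.connected.dist_triangle (u := x) (v := v) (w := y)
  have := hmax y
  rw [hT.dist_eq_add_of_mem_edgeSide hp hx hx₀]
  omega

end Eccentricity

def moveBranch (T : SimpleGraph V) (v a b : V) : SimpleGraph V :=
  T.deleteEdges ((s(b, ·)) '' (T.neighborSet b \ {v})) ⊔
    fromEdgeSet ((s(a, ·)) '' (T.neighborSet b \ {v}))

section

variable {T : SimpleGraph V} {v a b c c' x y z : V}

lemma moveBranch_adj_of_ne (h : T.Adj x y) (hx : x ≠ b) (hy : y ≠ b) :
    (T.moveBranch v a b).Adj x y := by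
  refine .inl (deleteEdges_adj.mpr ⟨h, ?_⟩)
  rintro ⟨c, -, hc : s(b, c) = s(x, y)⟩
  rcases Sym2.mem_iff.mp (hc ▸ Sym2.mem_mk_left b c) with rfl | rfl
  exacts [hx rfl, hy rfl]

lemma moveBranch_adj_of_adj (hc : T.Adj b c) (hcv : c ≠ v) (hca : c ≠ a) :
    (T.moveBranch v a b).Adj a c :=
  .inr ((fromEdgeSet_adj _).mpr ⟨⟨c, ⟨hc, hcv⟩, rfl⟩, hca.symm⟩)

lemma moveBranch_adj_self (h : T.Adj b v) : (T.moveBranch v a b).Adj b v :=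
  .inl (deleteEdges_adj.mpr ⟨h, fun ⟨_, ⟨_, hcv⟩, hc⟩ ↦ hcv (Sym2.congr_right.mp hc)⟩)

lemma adj_or_exists_of_moveBranch_adj (h : (T.moveBranch v a b).Adj x y) :
    T.Adj x y ∨ ∃ c, T.Adj b c ∧ c ≠ v ∧ s(a, c) = s(x, y) := by
  rcases h with h | h
  · exact .inl (deleteEdges_adj.mp h).1
  · obtain ⟨⟨c, ⟨hc, hcv⟩, he⟩, -⟩ := (fromEdgeSet_adj _).mp h
    exact .inr ⟨c, hc, hcv, he⟩

structure BranchMove (T : SimpleGraph V) (v a b : V) : Prop where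
  isTree : T.IsTree
  adj_a : T.Adj a v
  adj_b : T.Adj b v
  ne : a ≠ b

namespace BranchMove

open Equiv

variable (h : BranchMove T v a b)
include h

lemma notMem_edgeSide_of_mem (hx : x ∈ T.edgeSide a v) : x ∉ T.edgeSide b v :=
  h.isTree.notMem_edgeSide_of_mem_edgeSide h.adj_a h.adj_b h.ne hx

lemma dist_a_eq_of_mem (hx : x ∈ T.edgeSide b v) : T.dist x a = T.dist x v + 1 := by
  rw [h.isTree.dist_eq_add_of_mem_edgeSide h.adj_b hx
    (h.notMem_edgeSide_of_mem mem_edgeSide_self), dist_eq_one_iff_adj.mpr h.adj_a.symm]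

lemma not_adj : ¬ T.Adj b a := fun hba ↦ by
  have := h.dist_a_eq_of_mem mem_edgeSide_self
  rw [dist_eq_one_iff_adj.mpr hba, dist_eq_one_iff_adj.mpr h.adj_b] at this
  omega

lemma dist_eq_two_of_adj (hc : T.Adj b c) (hcv : c ≠ v) : T.dist c v = 2 := by
  rw [h.isTree.dist_eq_add_one_of_mem_edgeSide h.adj_b (mem_edgeSide_of_adj_of_ne hc hcv),
    dist_eq_one_iff_adj.mpr hc.symm]

lemma not_adj_of_adj (hc : T.Adj b c) (hcv : c ≠ v) : ¬ T.Adj a c := fun hac ↦ by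
  have := h.dist_a_eq_of_mem (mem_edgeSide_of_adj_of_ne hc hcv)
  rw [dist_eq_one_iff_adj.mpr hac.symm, h.dist_eq_two_of_adj hc hcv] at this
  omega

lemma adj_moveBranch_of_adj (hy : T.Adj b y) : (T.moveBranch v a b).Adj a y := by
  by_cases hyv : y = v
  · subst hyv
    exact moveBranch_adj_of_ne h.adj_a h.ne h.adj_b.ne'
  · exact moveBranch_adj_of_adj hy hyv fun hya ↦ h.not_adj (hya ▸ hy)

noncomputable def fold : T →g T.moveBranch v a b where
  toFun x := if x = b then a else x
  map_rel' {x y} hxy := by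
    by_cases hx : x = b <;> by_cases hy : y = b <;> simp only [hx, hy, if_true, if_false]
    · subst hx hy
      exact absurd hxy (T.loopless.irrefl _)
    · subst hx
      exact h.adj_moveBranch_of_adj hxy
    · subst hy
      exact (h.adj_moveBranch_of_adj hxy.symm).symm
    · exact moveBranch_adj_of_ne hxy hx hy

lemma fold_of_ne (hx : x ≠ b) : h.fold x = x := if_neg hx

lemma fold_self : h.fold b = a := if_pos rfl

lemma dist_moveBranch_le_of_ne (hx : x ≠ b) (hy : y ≠ b) :
    (T.moveBranch v a b).dist x y ≤ T.dist x y := by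
  simpa only [h.fold_of_ne hx, h.fold_of_ne hy] using h.fold.dist_le (h.isTree.connected x y)

lemma dist_moveBranch_a_le (hx : x ≠ b) : (T.moveBranch v a b).dist x a ≤ T.dist x b := by
  simpa only [h.fold_of_ne hx, h.fold_self] using h.fold.dist_le (h.isTree.connected x b)

lemma dist_moveBranch_b_le (x : V) :
    (T.moveBranch v a b).dist x b ≤ T.dist x v + 1 := by
  by_cases hx : x = b
  · simp [hx]
  have := (moveBranch_adj_self (a := a) h.adj_b).symm.reachable.dist_triangle_right x
  rw [dist_eq_one_iff_adj.mpr (moveBranch_adj_self h.adj_b).symm] at this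
  have := h.dist_moveBranch_le_of_ne hx h.adj_b.ne'
  omega

lemma reachable_moveBranch (x : V) : (T.moveBranch v a b).Reachable x v := by
  by_cases hx : x = b
  · subst hx
    exact (moveBranch_adj_self h.adj_b).reachable
  · simpa only [h.fold_of_ne hx, h.fold_of_ne h.adj_b.ne'] using
      (h.isTree.connected x v).map h.fold

lemma connected_moveBranch : (T.moveBranch v a b).Connected :=
  (connected_iff_exists_forall_reachable _).mpr ⟨v, fun x ↦ (h.reachable_moveBranch x).symm⟩

lemma card_edgeSet_moveBranch [Finite V] :
    Nat.card (T.moveBranch v a b).edgeSet = Nat.card T.edgeSet := by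
  set C := T.neighborSet b \ {v}
  have inj {p : V} : Function.Injective (s(p, ·)) := fun _ _ ↦ Sym2.congr_right.mp
  have hR : (s(b, ·)) '' C ⊆ T.edgeSet := by
    rintro _ ⟨c, ⟨hc, -⟩, rfl⟩
    exact hc
  have hA : (s(a, ·)) '' C \ Sym2.diagSet = (s(a, ·)) '' C := by
    refine sdiff_eq_left.mpr (Set.disjoint_left.mpr ?_)
    rintro _ ⟨c, ⟨hc, -⟩, rfl⟩ hd
    exact h.not_adj (Sym2.mk_isDiag_iff.mp hd ▸ hc)
  have hdisj : Disjoint (T.edgeSet \ (s(b, ·)) '' C) ((s(a, ·)) '' C) := by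
    refine Set.disjoint_right.mpr ?_
    rintro _ ⟨c, ⟨hc, hcv⟩, rfl⟩ ⟨hac, -⟩
    exact h.not_adj_of_adj hc hcv hac
  have hle := Set.ncard_le_ncard hR
  rw [Set.ncard_image_of_injective _ inj] at hle
  rw [moveBranch, edgeSet_sup, edgeSet_deleteEdges, edgeSet_fromEdgeSet, hA, Nat.card_coe_set_eq,
    Set.ncard_union_eq hdisj, Set.ncard_sdiff hR, Set.ncard_image_of_injective _ inj,
    Set.ncard_image_of_injective _ inj, Nat.card_coe_set_eq]
  omega

lemma isTree_moveBranch [Finite V] : (T.moveBranch v a b).IsTree := by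
  rw [isTree_iff_connected_and_card, h.card_edgeSet_moveBranch]
  exact ⟨h.connected_moveBranch, (isTree_iff_connected_and_card.mp h.isTree).2⟩

lemma dist_le_dist_moveBranch (hza : z ∉ T.edgeSide a v) (hzb : z ∉ T.edgeSide b v) (y : V) :
    T.dist z y ≤ (T.moveBranch v a b).dist z y := by
  have hz_a := h.isTree.dist_eq_add_one_of_notMem_edgeSide h.adj_a hza
  have lip : ∀ ⦃x y⦄, (T.moveBranch v a b).Adj x y → T.dist z x ≤ T.dist z y + 1 := by
    intro x y hxy
    rcases adj_or_exists_of_moveBranch_adj hxy with hxy | ⟨c, hc, hcv, he⟩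
    · have := hxy.symm.reachable.dist_triangle_right z
      rwa [dist_eq_one_iff_adj.mpr hxy.symm] at this
    · have hz_c := h.isTree.dist_eq_add_of_mem_edgeSide h.adj_b
        (mem_edgeSide_of_adj_of_ne hc hcv) hzb
      rw [h.dist_eq_two_of_adj hc hcv, dist_comm (u := v)] at hz_c
      rcases Sym2.eq_iff.mp he with ⟨rfl, rfl⟩ | ⟨rfl, rfl⟩ <;>
        rw [dist_comm (u := z) (v := c)] <;> omega
  have := (h.connected_moveBranch y z).le_add_dist_of_forall_adj lip
  rwa [dist_self, zero_add, dist_comm (u := y)] at this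

lemma dist_moveBranch_le (hzb : z ∉ T.edgeSide b v) (y : V) :
    (T.moveBranch v a b).dist z y ≤ T.dist z y := by
  have hz : z ≠ b := fun hz ↦ hzb (hz ▸ mem_edgeSide_self)
  by_cases hy : y = b
  · subst hy
    rw [dist_comm, h.isTree.dist_eq_add_one_of_notMem_edgeSide h.adj_b hzb, dist_comm]
    exact h.dist_moveBranch_b_le z
  · exact h.dist_moveBranch_le_of_ne hz hy

lemma dist_moveBranch_eq (hza : z ∉ T.edgeSide a v) (hzb : z ∉ T.edgeSide b v) (y : V) :
    (T.moveBranch v a b).dist z y = T.dist z y :=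
  (h.dist_moveBranch_le hzb y).antisymm (h.dist_le_dist_moveBranch hza hzb y)

lemma swap_apply_mem_iff : swap a b x ∈ T.edgeSide b v \ {b} ↔ x ∈ T.edgeSide b v \ {b} := by
  have ha : a ∉ T.edgeSide b v \ {b} := fun ha ↦ h.notMem_edgeSide_of_mem mem_edgeSide_self ha.1
  by_cases hxa : x = a
  · subst hxa
    simp [ha]
  by_cases hxb : x = b
  · subst hxb
    simp [ha]
  rw [swap_apply_of_ne_of_ne hxa hxb]

lemma swap_apply_of_mem (hx : x ∈ T.edgeSide b v \ {b}) : swap a b x = x :=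
  swap_apply_of_ne_of_ne
    (fun hxa ↦ h.notMem_edgeSide_of_mem (hxa ▸ mem_edgeSide_self) hx.1) hx.2

/-- `T.edgeSide b v \ {b}` is the subtree that moves; seen from it, `a` and `b` trade places. -/
noncomputable def pairPerm : Perm (V × V) :=
  Function.Involutive.toPerm
    (fun p ↦ (if p.2 ∈ T.edgeSide b v \ {b} then swap a b p.1 else p.1,
      if p.1 ∈ T.edgeSide b v \ {b} then swap a b p.2 else p.2))
    fun ⟨x, y⟩ ↦ by
      by_cases hx : x ∈ T.edgeSide b v \ {b} <;> by_cases hy : y ∈ T.edgeSide b v \ {b} <;>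
        simp [hx, hy, h.swap_apply_mem_iff, h.swap_apply_of_mem]

lemma pairPerm_apply (p : V × V) : h.pairPerm p =
    (if p.2 ∈ T.edgeSide b v \ {b} then swap a b p.1 else p.1,
      if p.1 ∈ T.edgeSide b v \ {b} then swap a b p.2 else p.2) := rfl

lemma pairPerm_fst_eq_snd_iff (p : V × V) :
    (h.pairPerm p).1 = (h.pairPerm p).2 ↔ p.1 = p.2 := by
  obtain ⟨x, y⟩ := p
  rw [pairPerm_apply]
  by_cases hx : x ∈ T.edgeSide b v \ {b} <;> by_cases hy : y ∈ T.edgeSide b v \ {b}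
  · simp [hx, hy, h.swap_apply_of_mem]
  · simp only [hx, hy, if_true, if_false]
    constructor <;> rintro rfl
    · exact absurd (h.swap_apply_mem_iff.mp hx) hy
    · exact absurd hx hy
  · simp only [hx, hy, if_true, if_false]
    constructor <;> intro hxy
    · exact (hx (h.swap_apply_mem_iff.mp (by rwa [hxy]))).elim
    · exact (hx (hxy ▸ hy)).elim
  · simp [hx, hy]

lemma dist_moveBranch_le_of_notMem (hx : x ∉ T.edgeSide b v \ {b})
    (hy : y ∉ T.edgeSide b v \ {b}) : (T.moveBranch v a b).dist x y ≤ T.dist x y := by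
  by_cases hxb : x ∈ T.edgeSide b v
  · obtain rfl : x = b := not_not.mp fun hne ↦ hx ⟨hxb, hne⟩
    by_cases hyb : y ∈ T.edgeSide x v
    · obtain rfl : y = x := not_not.mp fun hne ↦ hy ⟨hyb, hne⟩
      simp
    · rw [dist_comm, dist_comm (G := T)]
      exact h.dist_moveBranch_le hyb x
  · exact h.dist_moveBranch_le hxb y

lemma dist_moveBranch_swap_le (hx : x ∈ T.edgeSide b v \ {b}) (hy : y ∉ T.edgeSide b v \ {b}) :
    (T.moveBranch v a b).dist x (swap a b y) ≤ T.dist x y := by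
  by_cases hya : y = a
  · subst hya
    rw [swap_apply_left, h.dist_a_eq_of_mem hx.1]
    exact h.dist_moveBranch_b_le x
  by_cases hyb : y = b
  · subst hyb
    rw [swap_apply_right]
    exact h.dist_moveBranch_a_le hx.2
  · rw [swap_apply_of_ne_of_ne hya hyb]
    exact h.dist_moveBranch_le_of_ne hx.2 hyb

lemma dist_pairPerm_le (p : V × V) :
    (T.moveBranch v a b).dist (h.pairPerm p).1 (h.pairPerm p).2 ≤ T.dist p.1 p.2 := by
  obtain ⟨x, y⟩ := p
  rw [pairPerm_apply]
  by_cases hx : x ∈ T.edgeSide b v \ {b} <;> by_cases hy : y ∈ T.edgeSide b v \ {b} <;>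
    simp only [hx, hy, if_true, if_false]
  · rw [h.swap_apply_of_mem hx, h.swap_apply_of_mem hy]
    exact h.dist_moveBranch_le_of_ne hx.2 hy.2
  · exact h.dist_moveBranch_swap_le hx hy
  · rw [dist_comm, dist_comm (G := T)]
    exact h.dist_moveBranch_swap_le hy hx
  · exact h.dist_moveBranch_le_of_notMem hx hy

lemma exists_dist_pairPerm_lt (hc : T.Adj b c) (hcv : c ≠ v) (hc' : T.Adj a c')
    (hc'v : c' ≠ v) :
    ∃ p : V × V, p.1 ≠ p.2 ∧
      (T.moveBranch v a b).dist (h.pairPerm p).1 (h.pairPerm p).2 < T.dist p.1 p.2 := by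
  have hcD : c ∈ T.edgeSide b v \ {b} := ⟨mem_edgeSide_of_adj_of_ne hc hcv, hc.ne'⟩
  have hc'a : c' ∈ T.edgeSide a v := mem_edgeSide_of_adj_of_ne hc' hc'v
  have hc'b : c' ∉ T.edgeSide b v := h.notMem_edgeSide_of_mem hc'a
  have hc'_ne_b : c' ≠ b := fun e ↦ hc'b (e ▸ mem_edgeSide_self)
  refine ⟨(c, c'), fun e : c = c' ↦ hc'b (e ▸ hcD.1), ?_⟩
  have hp : h.pairPerm (c, c') = (c, c') := by
    rw [pairPerm_apply]
    simp [hcD, hc'b, swap_apply_of_ne_of_ne hc'.ne' hc'_ne_b]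
  have h2 : (T.moveBranch v a b).dist c c' ≤ 2 :=
    dist_le (.cons (moveBranch_adj_of_adj hc hcv fun e : c = a ↦ h.not_adj (e ▸ hc)).symm
      (.cons (moveBranch_adj_of_ne hc' h.ne hc'_ne_b) .nil))
  have h4 : T.dist c c' = 4 := by
    rw [h.isTree.dist_eq_add_of_mem_edgeSide h.adj_b hcD.1 hc'b, h.dist_eq_two_of_adj hc hcv,
      dist_comm, h.isTree.dist_eq_add_one_of_mem_edgeSide h.adj_a hc'a,
      dist_eq_one_iff_adj.mpr hc'.symm]
  rw [hp]
  dsimp only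
  omega

end BranchMove

end

section

variable [Fintype V] {T : SimpleGraph V} {v a b c c' x₀ : V} {g : ℕ → ℝ}

lemma BranchMove.ecc_moveBranch (h : BranchMove T v a b) (hx₀a : x₀ ∉ T.edgeSide a v)
    (hx₀b : x₀ ∉ T.edgeSide b v) (hmax : ∀ y, T.dist v y ≤ T.dist v x₀) (x : V) :
    ecc (T.moveBranch v a b) x = ecc T x := by
  by_cases hx : x ∈ T.edgeSide a v ∨ x ∈ T.edgeSide b v
  · have hx₀ : T.dist x x₀ = T.dist x v + T.dist v x₀ ∧ ecc T x = T.dist x x₀ := by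
      rcases hx with hx | hx
      · exact ⟨h.isTree.dist_eq_add_of_mem_edgeSide h.adj_a hx hx₀a,
          h.isTree.ecc_eq_dist_of_mem_edgeSide h.adj_a hx hx₀a hmax⟩
      · exact ⟨h.isTree.dist_eq_add_of_mem_edgeSide h.adj_b hx hx₀b,
          h.isTree.ecc_eq_dist_of_mem_edgeSide h.adj_b hx hx₀b hmax⟩
    have hva := h.isTree.isAcyclic.notMem_edgeSide h.adj_a.symm mem_edgeSide_self
    have hvb := h.isTree.isAcyclic.notMem_edgeSide h.adj_b.symm mem_edgeSide_self
    refine (ecc_le_iff.mpr fun y ↦ ?_).antisymm ?_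
    · have := h.connected_moveBranch.dist_triangle (u := x) (v := v) (w := y)
      have : (T.moveBranch v a b).dist x v = T.dist x v := by
        rw [dist_comm, h.dist_moveBranch_eq hva hvb, dist_comm]
      have := h.dist_moveBranch_eq hva hvb y
      have := hmax y
      omega
    · rw [hx₀.2, dist_comm, ← h.dist_moveBranch_eq hx₀a hx₀b, dist_comm]
      exact dist_le_ecc _ x x₀
  · push Not at hx
    simp only [ecc, h.dist_moveBranch_eq hx.1 hx.2]

lemma BranchMove.wiener_moveBranch_le (h : BranchMove T v a b) (hg : Monotone g) :
    wiener (T.moveBranch v a b) g ≤ wiener T g :=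
  wiener_le_wiener_of_perm hg h.pairPerm h.pairPerm_fst_eq_snd_iff h.dist_pairPerm_le

lemma BranchMove.wiener_moveBranch_lt (h : BranchMove T v a b) (hg : StrictMono g)
    (hc : T.Adj b c) (hcv : c ≠ v) (hc' : T.Adj a c') (hc'v : c' ≠ v) :
    wiener (T.moveBranch v a b) g < wiener T g :=
  wiener_lt_wiener_of_perm hg h.pairPerm h.pairPerm_fst_eq_snd_iff h.dist_pairPerm_le
    (h.exists_dist_pairPerm_lt hc hcv hc' hc'v)

lemma exists_adj_ne_of_not_isLeaf_s13 (hab : T.Adj a b) (ha : ¬ IsLeaf T a) :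
    ∃ c, T.Adj a c ∧ c ≠ b := by
  have : Nonempty {u // T.Adj a u} := ⟨⟨b, hab⟩⟩
  have : Nontrivial {u // T.Adj a u} :=
    Finite.one_lt_card_iff_nontrivial.mp (lt_of_le_of_ne Nat.card_pos (Ne.symm ha))
  obtain ⟨⟨c, hc⟩, hcb⟩ := exists_ne (⟨b, hab⟩ : {u // T.Adj a u})
  exact ⟨c, hc, fun e ↦ hcb (Subtype.ext e)⟩

lemma exists_three_of_not_isCaterpillar (hT : ¬ IsCaterpillar T) :
    ∃ v p q r : V, (T.Adj v p ∧ ¬ IsLeaf T p) ∧ (T.Adj v q ∧ ¬ IsLeaf T q) ∧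
      (T.Adj v r ∧ ¬ IsLeaf T r) ∧ p ≠ q ∧ p ≠ r ∧ q ≠ r := by
  simp only [IsCaterpillar, not_forall, not_le] at hT
  obtain ⟨v, -, hv⟩ := hT
  obtain ⟨p, q, r, hp, hq, hr, hpq, hpr, hqr⟩ :=
    (Set.two_lt_ncard_iff (s := {u | T.Adj v u ∧ ¬ IsLeaf T u})).mp hv
  exact ⟨v, p, q, r, hp, hq, hr, hpq, hpr, hqr⟩

theorem IsTree.exists_ecc_eq_wiener_lt_of_not_isCaterpillar (hT : T.IsTree)
    (hnc : ¬ IsCaterpillar T) :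
    ∃ T' : SimpleGraph V, T'.IsTree ∧ (∀ x, ecc T' x = ecc T x) ∧
      (∀ g : ℕ → ℝ, Monotone g → wiener T' g ≤ wiener T g) ∧
      (∀ g : ℕ → ℝ, StrictMono g → wiener T' g < wiener T g) := by
  obtain ⟨v, p, q, r, hp, hq, hr, hpq, hpr, hqr⟩ := exists_three_of_not_isCaterpillar hnc
  have : Nonempty V := ⟨v⟩
  obtain ⟨x₀, hx₀⟩ := exists_dist_eq_ecc T v
  have hmax (y : V) : T.dist v y ≤ T.dist v x₀ := hx₀ ▸ dist_le_ecc T v y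
  have other {a b : V} (ha : T.Adj v a) (hb : T.Adj v b) (hab : a ≠ b)
      (hx : x₀ ∈ T.edgeSide a v) :
      x₀ ∉ T.edgeSide b v :=
    hT.notMem_edgeSide_of_mem_edgeSide ha.symm hb.symm hab hx
  obtain ⟨a, b, ha, hb, hab, hx₀a, hx₀b⟩ : ∃ a b, (T.Adj v a ∧ ¬ IsLeaf T a) ∧
      (T.Adj v b ∧ ¬ IsLeaf T b) ∧ a ≠ b ∧
      x₀ ∉ T.edgeSide a v ∧ x₀ ∉ T.edgeSide b v := by
    by_cases hxp : x₀ ∈ T.edgeSide p v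
    · exact ⟨q, r, hq, hr, hqr, other hp.1 hq.1 hpq hxp, other hp.1 hr.1 hpr hxp⟩
    by_cases hxq : x₀ ∈ T.edgeSide q v
    · exact ⟨p, r, hp, hr, hpr, hxp, other hq.1 hr.1 hqr hxq⟩
    · exact ⟨p, q, hp, hq, hpq, hxp, hxq⟩
  have h : BranchMove T v a b := ⟨hT, ha.1.symm, hb.1.symm, hab⟩
  obtain ⟨c, hc, hcv⟩ := exists_adj_ne_of_not_isLeaf_s13 h.adj_b hb.2
  obtain ⟨c', hc', hc'v⟩ := exists_adj_ne_of_not_isLeaf_s13 h.adj_a ha.2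
  exact ⟨_, h.isTree_moveBranch, h.ecc_moveBranch hx₀a hx₀b hmax,
    fun _ hg ↦ h.wiener_moveBranch_le hg,
    fun _ hg ↦ h.wiener_moveBranch_lt hg hc hcv hc' hc'v⟩

lemma IsTree.exists_isCaterpillar_wiener_le (hT : T.IsTree) (hg : Monotone g) :
    ∃ C : SimpleGraph V, C.IsTree ∧ (∀ x, ecc C x = ecc T x) ∧ IsCaterpillar C ∧
      wiener C g ≤ wiener T g := by
  let S := univ.filter fun C : SimpleGraph V ↦
    C.IsTree ∧ (∀ x, ecc C x = ecc T x) ∧ wiener C g ≤ wiener T g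
  obtain ⟨C, hC, hmin⟩ := S.exists_min_image (wiener · (↑)) ⟨T, by simp [S, hT]⟩
  simp only [S, mem_filter, mem_univ, true_and] at hC hmin
  refine ⟨C, hC.1, hC.2.1, by_contra fun hnc ↦ ?_, hC.2.2⟩
  obtain ⟨C', hC', hecc, hle, hlt⟩ := hC.1.exists_ecc_eq_wiener_lt_of_not_isCaterpillar hnc
  exact (hlt _ Nat.strictMono_cast).not_ge
    (hmin C' ⟨hC', fun x ↦ (hecc x).trans (hC.2.1 x), (hle g hg).trans hC.2.2⟩)

end

end SimpleGraph

theorem stmt13_general [Fintype V] (g : ℕ → ℝ) (hgmono : Monotone g)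
    (G : SimpleGraph V) (hG : G.IsTree) :
    (∃ C : SimpleGraph V, C.IsTree ∧ sameEccSeq G C ∧ IsCaterpillar C ∧
      ∀ H : SimpleGraph V, H.IsTree → sameEccSeq G H → wiener C g ≤ wiener H g) ∧
    (StrictMono g → ∀ H : SimpleGraph V, H.IsTree → sameEccSeq G H →
      (∀ H' : SimpleGraph V, H'.IsTree → sameEccSeq G H' → wiener H g ≤ wiener H' g) →
      IsCaterpillar H) := by
  refine ⟨?_, fun hg H hH hGH hmin ↦ by_contra fun hnc ↦ ?_⟩
  · let S := univ.filter fun H : SimpleGraph V ↦ H.IsTree ∧ sameEccSeq G H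
    obtain ⟨C₀, hC₀, hmin⟩ := S.exists_min_image (wiener · g) ⟨G, by simp [S, hG, sameEccSeq]⟩
    simp only [S, mem_filter, mem_univ, true_and] at hC₀ hmin
    obtain ⟨C, hC, hecc, hcat, hle⟩ := hC₀.1.exists_isCaterpillar_wiener_le hgmono
    exact ⟨C, hC, hC₀.2.of_ecc_eq hecc, hcat, fun H hH hGH ↦ hle.trans (hmin H ⟨hH, hGH⟩)⟩
  · obtain ⟨H', hH', hecc, -, hlt⟩ := hH.exists_ecc_eq_wiener_lt_of_not_isCaterpillar hnc
    exact (hlt g hg).not_ge (hmin H' hH' (hGH.of_ecc_eq hecc))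

/-- For nonnegative nondecreasing `g`, among the trees with a given eccentric sequence
(realised as trees on the same vertex set, with the eccentric sequence of a given tree `G`)
that minimise `W(·;g)`, at least one is a caterpillar; and if `g` is strictly increasing,
every minimiser is a caterpillar. -/
theorem stmt13 [Fintype V] (g : ℕ → ℝ) (hg0 : ∀ n : ℕ, 0 ≤ g n) (hgmono : Monotone g)
    (G : SimpleGraph V) (hG : G.IsTree) :
    (∃ C : SimpleGraph V, C.IsTree ∧ sameEccSeq G C ∧ IsCaterpillar C ∧
      ∀ H : SimpleGraph V, H.IsTree → sameEccSeq G H → wiener C g ≤ wiener H g) ∧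
    (StrictMono g → ∀ H : SimpleGraph V, H.IsTree → sameEccSeq G H →
      (∀ H' : SimpleGraph V, H'.IsTree → sameEccSeq G H' → wiener H g ≤ wiener H' g) →
      IsCaterpillar H) :=
  stmt13_general g hgmono G hG
end
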